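/- For the associated metric g̃ on the quasi-Kähler Lie group example, the square norm of ∇̃J with respect to g̃ equals −8(λ₁λ₃ + λ₂λ₄); hence (G,J,g̃) is isotropic Kähler if and only if λ₁λ₃ + λ₂λ₄ = 0. -/

import Mathlib

/-!
The torsion and `g̃`-compatibility conditions determine `∇̃`: the difference `D` of two such
connections satisfies `D x y = D y x` and `g̃(D x y, z) = -g̃(D x z, y)`, and a trilinear form
symmetric in one pair of slots and skew in another vanishes. So `∇̃` is the explicit connection
`½([x,y] − J[x,Jy] + J[Jx,y])`. The matrix of `g̃` is its own inverse and pairs `eᵢ` only with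
`e_{i+2}`, so the square norm collapses to the sixteen terms `g̃((∇̃_{eᵢ}J)e_k, (∇̃_{e_{i+2}}J)e_{k+2})`,
which are computed directly.
-/

noncomputable section

/-- The standard basis of `ℝ⁴` (denoted `X₁,…,X₄` in the paper). -/
def e (i : Fin 4) : Fin 4 → ℝ := Pi.single i 1

/-- The almost complex structure: `J X₁ = X₃, J X₂ = X₄, J X₃ = −X₁, J X₄ = −X₂`. -/
def Jm (x : Fin 4 → ℝ) : Fin 4 → ℝ := ![-(x 2), -(x 3), x 0, x 1]

/-- The Norden metric `g = diag(1,1,−1,−1)`. -/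
def gm (x y : Fin 4 → ℝ) : ℝ := x 0 * y 0 + x 1 * y 1 - x 2 * y 2 - x 3 * y 3

/-- The associated Norden metric `g̃(x,y) = g(x,Jy)`. -/
def gt (x y : Fin 4 → ℝ) : ℝ := gm x (Jm y)

/-- The bracket of the 4-parametric family of Lie algebras:
`[X₁,X₃]=λ₂X₂+λ₄X₄`, `[X₂,X₄]=λ₁X₁+λ₃X₃`, `[X₂,X₃]=−λ₂X₁−λ₃X₄`,
`[X₃,X₄]=−λ₄X₁+λ₃X₂`, `[X₄,X₁]=λ₁X₂+λ₄X₃`, `[X₂,X₁]=−λ₂X₃+λ₁X₄`,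
extended bilinearly and skew-symmetrically (here with 0-based indices). -/
def br (l1 l2 l3 l4 : ℝ) (x y : Fin 4 → ℝ) : Fin 4 → ℝ :=
  ![ -l2*(x 1*y 2 - x 2*y 1) + l1*(x 1*y 3 - x 3*y 1) - l4*(x 2*y 3 - x 3*y 2),
      l2*(x 0*y 2 - x 2*y 0) - l1*(x 0*y 3 - x 3*y 0) + l3*(x 2*y 3 - x 3*y 2),
      l2*(x 0*y 1 - x 1*y 0) - l4*(x 0*y 3 - x 3*y 0) + l3*(x 1*y 3 - x 3*y 1),
     -l1*(x 0*y 1 - x 1*y 0) + l4*(x 0*y 2 - x 2*y 0) - l3*(x 1*y 2 - x 2*y 1) ]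

/-- The Levi-Civita connection of `g`: `∇_x y = ½[x,y]`. -/
def nab (l1 l2 l3 l4 : ℝ) (x y : Fin 4 → ℝ) : Fin 4 → ℝ :=
  ((1 : ℝ)/2) • br l1 l2 l3 l4 x y

/-- The matrix of `g` in the standard basis. -/
def G : Matrix (Fin 4) (Fin 4) ℝ := fun i j => gm (e i) (e j)

/-- The matrix of `g̃` in the standard basis. -/
def Gt : Matrix (Fin 4) (Fin 4) ℝ := fun i j => gt (e i) (e j)

open LinearMap (BilinForm)

def IsLeviCivita {R M : Type*} [CommRing R] [AddCommGroup M] [Module R M]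
    (B : BilinForm R M) (brk : M → M → M) (nabla : M → M → M) : Prop :=
  (∀ x y, nabla x y - nabla y x = brk x y) ∧ ∀ x y z, B (nabla x y) z + B y (nabla x z) = 0

theorem IsLeviCivita.unique {R M : Type*} [CommRing R] [NoZeroDivisors R] [CharZero R]
    [AddCommGroup M] [Module R M] {B : BilinForm R M} (hsymm : B.IsSymm)
    (hsep : B.SeparatingLeft) {brk nabla nabla' : M → M → M} (h : IsLeviCivita B brk nabla)
    (h' : IsLeviCivita B brk nabla') : nabla = nabla' := by
  set D : M → M → M := fun x y => nabla x y - nabla' x y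
  have hD_comm : ∀ x y, D x y = D y x := fun x y =>
    calc D x y = (nabla x y - nabla y x) - (nabla' x y - nabla' y x) + D y x := by
          simp only [D]; abel
      _ = D y x := by rw [h.1, h'.1, sub_self, zero_add]
  have hD_skew : ∀ x y z, B (D x y) z = -B (D x z) y := fun x y z => by
    simp only [D, map_sub, LinearMap.sub_apply]
    linear_combination h.2 x y z - h'.2 x y z - hsymm.eq y (nabla x z) + hsymm.eq y (nabla' x z)
  funext x y
  refine sub_eq_zero.mp (hsep _ fun z => self_eq_neg.mp ?_)
  change B (D x y) z = -B (D x y) z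
  calc B (D x y) z = -B (D x z) y := hD_skew x y z
    _ = -B (D z x) y := by rw [hD_comm]
    _ = B (D z y) x := by rw [hD_skew, neg_neg]
    _ = B (D y z) x := by rw [hD_comm]
    _ = -B (D y x) z := hD_skew y z x
    _ = -B (D x y) z := by rw [hD_comm]

def gtForm : BilinForm ℝ (Fin 4 → ℝ) :=
  LinearMap.mk₂ ℝ gt
    (fun _ _ _ => by simp only [gt, gm, Pi.add_apply]; ring)
    (fun _ _ _ => by simp only [gt, gm, Pi.smul_apply, smul_eq_mul]; ring)
    (fun _ _ _ => by simp only [gt, gm, Jm, Pi.add_apply, Matrix.cons_val]; ring)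
    (fun _ _ _ => by simp only [gt, gm, Jm, Pi.smul_apply, smul_eq_mul, Matrix.cons_val]; ring)

theorem gtForm_isSymm : gtForm.IsSymm :=
  ⟨fun x y => by simp only [gtForm, LinearMap.mk₂_apply, gt, gm, Jm, Matrix.cons_val]; ring⟩

theorem gtForm_separatingLeft : gtForm.SeparatingLeft := fun x hx => by
  have h i := hx (e i)
  funext i; fin_cases i
  · simpa [gtForm, gt, gm, Jm, e] using h 2
  · simpa [gtForm, gt, gm, Jm, e] using h 3
  · simpa [gtForm, gt, gm, Jm, e] using h 0
  · simpa [gtForm, gt, gm, Jm, e] using h 1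

theorem Jm_neg (x : Fin 4 → ℝ) : Jm (-x) = -Jm x := by
  funext i; fin_cases i <;> simp [Jm]

theorem br_swap {l1 l2 l3 l4 : ℝ} (x y : Fin 4 → ℝ) :
    br l1 l2 l3 l4 y x = -br l1 l2 l3 l4 x y := by
  funext i; fin_cases i <;> simp [br] <;> ring

section

variable (l1 l2 l3 l4 : ℝ)

/- The `J`-terms carry the opposite sign to `½{[X,Y] + J[X,JY] − J[JX,Y]}`: with that sign the
connection is not `g̃`-compatible for this `J` and bracket. -/
def lcTilde (x y : Fin 4 → ℝ) : Fin 4 → ℝ :=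
  (1 / 2 : ℝ) • (br l1 l2 l3 l4 x y - Jm (br l1 l2 l3 l4 x (Jm y)) + Jm (br l1 l2 l3 l4 (Jm x) y))

theorem isLeviCivita_lcTilde : IsLeviCivita gtForm (br l1 l2 l3 l4) (lcTilde l1 l2 l3 l4) := by
  constructor
  · intro x y
    rw [lcTilde, lcTilde, br_swap y x, br_swap y (Jm x), br_swap (Jm y) x, Jm_neg, Jm_neg]
    module
  · intro x y z
    simp only [gtForm, LinearMap.mk₂_apply, gt, gm, lcTilde, br, Jm, Pi.add_apply, Pi.sub_apply,
      Pi.smul_apply, smul_eq_mul, Matrix.cons_val]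
    ring

end

theorem Gt_mul_self : Gt * Gt = 1 := by
  ext i j
  fin_cases i <;> fin_cases j <;> simp [Gt, gt, gm, Jm, e, Matrix.mul_apply, Fin.sum_univ_four]

theorem Gt_apply (i j : Fin 4) : Gt i j = -if j = i + 2 then 1 else 0 := by
  fin_cases i <;> fin_cases j <;> simp [Gt, gt, gm, Jm, e]

theorem Gt_inv_apply (i j : Fin 4) : Gt⁻¹ i j = -if j = i + 2 then 1 else 0 := by
  rw [Matrix.inv_eq_right_inv Gt_mul_self, Gt_apply]

theorem sum_Gt_inv_mul (i : Fin 4) (f : Fin 4 → ℝ) : ∑ j, Gt⁻¹ i j * f j = -f (i + 2) := by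
  simp [Gt_inv_apply]

theorem sum_Gt_inv_contract (V : Fin 4 → Fin 4 → Fin 4 → ℝ) :
    ∑ i, ∑ j, ∑ k, ∑ m, Gt⁻¹ i j * Gt⁻¹ k m * gt (V i k) (V j m)
      = ∑ i, ∑ k, gt (V i k) (V (i + 2) (k + 2)) := by
  simp only [mul_assoc, ← Finset.mul_sum, sum_Gt_inv_mul, mul_neg, Finset.sum_neg_distrib, neg_neg]

def covDerivJ (nabla : (Fin 4 → ℝ) → (Fin 4 → ℝ) → Fin 4 → ℝ) (x y : Fin 4 → ℝ) : Fin 4 → ℝ :=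
  nabla x (Jm y) - Jm (nabla x y)

theorem sum_gt_covDerivJ_lcTilde (l1 l2 l3 l4 : ℝ) :
    ∑ i, ∑ k, gt (covDerivJ (lcTilde l1 l2 l3 l4) (e i) (e k))
      (covDerivJ (lcTilde l1 l2 l3 l4) (e (i + 2)) (e (k + 2))) = -8 * (l1 * l3 + l2 * l4) := by
  simp only [Fin.sum_univ_four, covDerivJ, lcTilde, br, Jm, gt, gm, e, Fin.reduceAdd,
    Pi.add_apply, Pi.sub_apply, Pi.smul_apply, smul_eq_mul, Matrix.cons_val, Pi.single_apply,
    Fin.reduceEq, if_true, if_false]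
  ring

end

theorem stmt_13 (l1 l2 l3 l4 : ℝ)
    -- `nt` is the Levi-Civita connection `∇̃` of the (left-invariant) metric `g̃`:
    -- the unique bilinear, torsion-free, `g̃`-compatible connection on the Lie algebra
    (nt : (Fin 4 → ℝ) → (Fin 4 → ℝ) → (Fin 4 → ℝ))
    (hnt_tor : ∀ x y, nt x y - nt y x = br l1 l2 l3 l4 x y)
    (hnt_met : ∀ x y z, gt (nt x y) z + gt y (nt x z) = 0)
    -- `nJt i k = (∇̃_{eᵢ} J) e_k`
    (nJt : Fin 4 → Fin 4 → (Fin 4 → ℝ))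
    (hnJt : ∀ i k, nJt i k = nt (e i) (Jm (e k)) - Jm (nt (e i) (e k))) :
    (∑ i, ∑ j, ∑ k, ∑ m, Gt⁻¹ i j * Gt⁻¹ k m * gt (nJt i k) (nJt j m))
        = -8 * (l1*l3 + l2*l4) ∧
    ((∑ i, ∑ j, ∑ k, ∑ m, Gt⁻¹ i j * Gt⁻¹ k m * gt (nJt i k) (nJt j m)) = 0 ↔
      l1*l3 + l2*l4 = 0) := by
  have hnt : nt = lcTilde l1 l2 l3 l4 :=
    IsLeviCivita.unique gtForm_isSymm gtForm_separatingLeft ⟨hnt_tor, hnt_met⟩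
      (isLeviCivita_lcTilde l1 l2 l3 l4)
  have hnJt' : nJt = fun i k => covDerivJ (lcTilde l1 l2 l3 l4) (e i) (e k) := by
    funext i k; rw [hnJt, hnt, covDerivJ]
  have hnorm : (∑ i, ∑ j, ∑ k, ∑ m, Gt⁻¹ i j * Gt⁻¹ k m * gt (nJt i k) (nJt j m))
      = -8 * (l1*l3 + l2*l4) := by
    rw [sum_Gt_inv_contract, hnJt', sum_gt_covDerivJ_lcTilde]
  refine ⟨hnorm, ?_⟩
  rw [hnorm]
  simp
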